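/- arXiv:1406.4865 — 2 statements merged into one kernel-verified Lean document; each statement's English description precedes it below -/
import Mathlib

section
/- The corrected quadrature rule ∫_a^b p(x) dx = Σ_{j=0}^N [w_j f_j + q_j(ξ)], with w_j = ∫_a^b π_j and q_j(ξ) = g_j θ(ξ−x_j)∫_ξ^b π_j − g_j θ(x_j−ξ)∫_a^ξ π_j, exactly integrates the piecewise polynomial p(x) = θ(x−ξ) p_+(x) + θ(ξ−x) p_−(x) where p_±(x) = Σ_j [f_j ± appropriate correction] π_j(x) as in equations (16)–(17). -/
/-!
Integration is linear, so each side is a sum over the nodes of coefficients times the integrals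
of `π j` over `[a, ξ]` and `[ξ, b]`; after splitting `w j = ∫_a^ξ π j + ∫_ξ^b π j` the identity
holds node by node as a ring identity.
-/

open Finset

/-- The Heaviside step function with θ(0) = 1/2. -/
noncomputable def heaviside (t : ℝ) : ℝ := if 0 < t then 1 else if t = 0 then 1/2 else 0

open MeasureTheory intervalIntegral

theorem continuous_prod_sub_div_sub {ι : Type*} (s : Finset ι) (x : ι → ℝ) (j : ι) :
    Continuous fun t => ∏ k ∈ s, (t - x k) / (x j - x k) :=
  continuous_finsetProd _ fun _ _ => (continuous_id.sub continuous_const).div_const _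

theorem intervalIntegral.integral_finsetSum_const_mul {ι : Type*} (s : Finset ι) (c : ι → ℝ)
    (φ : ι → ℝ → ℝ) {a b : ℝ} (hφ : ∀ j ∈ s, IntervalIntegrable (φ j) volume a b) :
    ∫ t in a..b, ∑ j ∈ s, c j * φ j t = ∑ j ∈ s, c j * ∫ t in a..b, φ j t := by
  rw [integral_finsetSum fun j hj => (hφ j hj).const_mul (c j)]
  exact sum_congr rfl fun j _ => integral_const_mul _ _

theorem corrected_quadrature_exact_general
    (N : ℕ) (a b : ℝ) (x : Fin (N + 1) → ℝ)
    (ξ : ℝ)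
    (f g : Fin (N + 1) → ℝ)
    (π : Fin (N + 1) → ℝ → ℝ)
    (hπ : ∀ j t, π j t = ∏ k ∈ Finset.univ.erase j, (t - x k) / (x j - x k))
    (pp pm : ℝ → ℝ)
    (hpp : ∀ t, pp t = ∑ j, (f j + heaviside (ξ - x j) * g j) * π j t)
    (hpm : ∀ t, pm t = ∑ j, (f j - heaviside (x j - ξ) * g j) * π j t)
    (w q : Fin (N + 1) → ℝ)
    (hw : ∀ j, w j = ∫ t in a..b, π j t)
    (hq : ∀ j, q j = g j * heaviside (ξ - x j) * (∫ t in ξ..b, π j t)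
                   - g j * heaviside (x j - ξ) * (∫ t in a..ξ, π j t)) :
    (∫ t in a..ξ, pm t) + (∫ t in ξ..b, pp t) = ∑ j, (w j * f j + q j) := by
  have hπint : ∀ j c d, IntervalIntegrable (π j) volume c d := fun j c d => by
    rw [funext (hπ j)]
    exact (continuous_prod_sub_div_sub _ x j).intervalIntegrable c d
  rw [integral_congr fun t _ => hpm t, integral_congr fun t _ => hpp t,
    integral_finsetSum_const_mul _ _ _ fun j _ => hπint j a ξ,
    integral_finsetSum_const_mul _ _ _ fun j _ => hπint j ξ b, ← sum_add_distrib]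
  refine sum_congr rfl fun j _ => ?_
  rw [hw j, hq j, ← integral_add_adjacent_intervals (hπint j a ξ) (hπint j ξ b)]
  ring

/-- The corrected quadrature rule Σ_j [w_j f_j + q_j(ξ)], with
w_j = ∫_a^b π_j, q_j(ξ) = g_j θ(ξ−x_j)∫_ξ^b π_j − g_j θ(x_j−ξ)∫_a^ξ π_j, exactly
integrates the piecewise polynomial p = θ(x−ξ)p_+ + θ(ξ−x)p_−, i.e.
∫_a^ξ p_− + ∫_ξ^b p_+ = Σ_j [w_j f_j + q_j(ξ)]. -/
theorem corrected_quadrature_exact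
    (N : ℕ) (a b : ℝ) (x : Fin (N + 1) → ℝ) (hx : Function.Injective x)
    (hmem : ∀ i, x i ∈ Set.Icc a b)
    (ξ : ℝ) (hξ : ξ ∈ Set.Ioo a b) (hξx : ∀ j, ξ ≠ x j)
    (f g : Fin (N + 1) → ℝ)
    (π : Fin (N + 1) → ℝ → ℝ)
    (hπ : ∀ j t, π j t = ∏ k ∈ Finset.univ.erase j, (t - x k) / (x j - x k))
    (pp pm : ℝ → ℝ)
    (hpp : ∀ t, pp t = ∑ j, (f j + heaviside (ξ - x j) * g j) * π j t)
    (hpm : ∀ t, pm t = ∑ j, (f j - heaviside (x j - ξ) * g j) * π j t)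
    (w q : Fin (N + 1) → ℝ)
    (hw : ∀ j, w j = ∫ t in a..b, π j t)
    (hq : ∀ j, q j = g j * heaviside (ξ - x j) * (∫ t in ξ..b, π j t)
                   - g j * heaviside (x j - ξ) * (∫ t in a..ξ, π j t)) :
    (∫ t in a..ξ, pm t) + (∫ t in ξ..b, pp t) = ∑ j, (w j * f j + q j) :=
  corrected_quadrature_exact_general N a b x ξ f g π hπ pp pm hpp hpm w q hw hq
end

section
/- If f(x) = θ(x−ξ)P(x) + θ(ξ−x)Q(x) with P, Q polynomials of degree ≤ N, and J_m = P^{(m)}(ξ) − Q^{(m)}(ξ) for m = 0,...,N, then the corrected interpolant p from equation (18) with M = N and these jumps satisfies p(x) = f(x) for all x ≠ ξ. -/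
open Finset

lemma heaviside_pos {t : ℝ} (h : 0 < t) : heaviside t = 1 := by
  simp [heaviside, h]

lemma heaviside_neg {t : ℝ} (h : t < 0) : heaviside t = 0 := by
  simp [heaviside, not_lt_of_gt h, ne_of_lt h]

/-- Taylor expansion for polynomials of degree ≤ N. -/
lemma taylor_sum_aux (N : ℕ) (ξ y : ℝ) (R : Polynomial ℝ) (hR : R.degree ≤ (N : ℕ)) :
    R.eval y = ∑ m ∈ Finset.range (N + 1),
      ((Polynomial.derivative^[m] R).eval ξ / (Nat.factorial m)) * (y - ξ) ^ m := by
  have h1 : R.eval y = (Polynomial.taylor ξ R).eval (y - ξ) :=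
    (Polynomial.taylor_eval_sub ξ R y).symm
  have hdeg : (Polynomial.taylor ξ R).natDegree < N + 1 := by
    rw [Polynomial.natDegree_taylor]
    exact Nat.lt_succ_of_le (Polynomial.natDegree_le_iff_degree_le.mpr hR)
  rw [h1, Polynomial.eval_eq_sum_range' hdeg]
  refine Finset.sum_congr rfl fun m _ => ?_
  congr 1
  rw [Polynomial.taylor_coeff]
  have h0 := congrFun (Polynomial.factorial_smul_hasseDeriv (R := ℝ) (k := m)) R
  have h2 : (Polynomial.derivative^[m] R).eval ξ
      = (m.factorial : ℝ) * (Polynomial.hasseDeriv m R).eval ξ := by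
    rw [← h0]
    simp [nsmul_eq_mul]
  rw [h2]
  have hm : (m.factorial : ℝ) ≠ 0 := Nat.cast_ne_zero.mpr m.factorial_ne_zero
  field_simp

/-- Lagrange interpolation is exact on polynomials of degree ≤ N. -/
lemma lagrange_exact (N : ℕ) (x : Fin (N + 1) → ℝ) (hx : Function.Injective x)
    (R : Polynomial ℝ) (hR : R.degree ≤ (N : ℕ)) (t : ℝ) :
    R.eval t = ∑ j, R.eval (x j) * ∏ k ∈ Finset.univ.erase j, (t - x k) / (x j - x k) := by
  have hinj : Set.InjOn x ((Finset.univ : Finset (Fin (N + 1))) : Set (Fin (N + 1))) :=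
    fun i _ j _ h => hx h
  have hcard : #(Finset.univ : Finset (Fin (N + 1))) = N + 1 := by simp
  have hdeg : R.degree < (#(Finset.univ : Finset (Fin (N + 1))) : ℕ) := by
    rw [hcard]
    exact lt_of_le_of_lt hR (by exact_mod_cast Nat.lt_succ_self N)
  have hI := Lagrange.eq_interpolate hinj hdeg
  have h2 := congrArg (Polynomial.eval t) hI
  rw [Lagrange.interpolate_apply, Polynomial.eval_finset_sum] at h2
  rw [h2]
  refine Finset.sum_congr rfl fun j _ => ?_
  rw [Polynomial.eval_mul, Polynomial.eval_C, Lagrange.basis, Polynomial.eval_prod]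
  congr 1
  refine Finset.prod_congr rfl fun k _ => ?_
  rw [Lagrange.basisDivisor]
  simp [div_eq_mul_inv, mul_comm]

/-- If f(x) = θ(x−ξ)P(x) + θ(ξ−x)Q(x) with P, Q polynomials of degree ≤ N,
and J_m = P^{(m)}(ξ) − Q^{(m)}(ξ) for m = 0, ..., N, then the corrected interpolant p
from Eq. (18), with g_j = Σ_{m=0}^N (J_m/m!)(x_j − ξ)^m and s_j as in Eq. (19),
satisfies p(x) = f(x) for all x ≠ ξ. -/
theorem corrected_interpolant_exact_for_piecewise_polynomials
    (N : ℕ) (a b : ℝ) (x : Fin (N + 1) → ℝ) (hx : Function.Injective x)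
    (hmem : ∀ i, x i ∈ Set.Icc a b)
    (ξ : ℝ) (hξ : ξ ∈ Set.Ioo a b) (hξx : ∀ j, ξ ≠ x j)
    (P Q : Polynomial ℝ) (hP : P.degree ≤ (N : ℕ)) (hQ : Q.degree ≤ (N : ℕ))
    (f : ℝ → ℝ)
    (hf : ∀ t, f t = heaviside (t - ξ) * P.eval t + heaviside (ξ - t) * Q.eval t)
    (J : ℕ → ℝ)
    (hJ : ∀ m ≤ N, J m = (Polynomial.derivative^[m] P).eval ξ
                       - (Polynomial.derivative^[m] Q).eval ξ)
    (g : Fin (N + 1) → ℝ)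
    (hg : ∀ j, g j = ∑ m ∈ Finset.range (N + 1), J m / (Nat.factorial m) * (x j - ξ) ^ m)
    (π : Fin (N + 1) → ℝ → ℝ)
    (hπ : ∀ j t, π j t = ∏ k ∈ Finset.univ.erase j, (t - x k) / (x j - x k))
    (s : Fin (N + 1) → ℝ → ℝ)
    (hs : ∀ j t, s j t =
      (heaviside (t - ξ) * heaviside (ξ - x j) - heaviside (ξ - t) * heaviside (x j - ξ)) * g j)
    (p : ℝ → ℝ)
    (hp : ∀ t, p t = ∑ j, (f (x j) + s j t) * π j t) :
    ∀ t : ℝ, t ≠ ξ → p t = f t := by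
  -- g j = P(x j) - Q(x j)
  have hgval : ∀ j, g j = P.eval (x j) - Q.eval (x j) := by
    intro j
    rw [hg j]
    have : ∀ m ∈ Finset.range (N + 1),
        J m / (Nat.factorial m) * (x j - ξ) ^ m
        = ((Polynomial.derivative^[m] P).eval ξ / (Nat.factorial m)) * (x j - ξ) ^ m
          - ((Polynomial.derivative^[m] Q).eval ξ / (Nat.factorial m)) * (x j - ξ) ^ m := by
      intro m hm
      rw [hJ m (Nat.lt_succ_iff.mp (Finset.mem_range.mp hm))]
      ring
    rw [Finset.sum_congr rfl this, Finset.sum_sub_distrib,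
      ← taylor_sum_aux N ξ (x j) P hP, ← taylor_sum_aux N ξ (x j) Q hQ]
  intro t ht
  rcases lt_or_gt_of_ne ht with hlt | hgt
  · -- t < ξ : f t = Q.eval t
    have h1 : heaviside (t - ξ) = 0 := heaviside_neg (by linarith)
    have h2 : heaviside (ξ - t) = 1 := heaviside_pos (by linarith)
    have hcoef : ∀ j, f (x j) + s j t = Q.eval (x j) := by
      intro j
      rw [hf (x j), hs j t, h1, h2]
      rcases lt_or_gt_of_ne (hξx j) with hj | hj
      · -- ξ < x j
        rw [heaviside_pos (by linarith : (0:ℝ) < x j - ξ),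
          heaviside_neg (by linarith : ξ - x j < 0), hgval j]
        ring
      · -- x j < ξ
        rw [heaviside_pos (by linarith : (0:ℝ) < ξ - x j),
          heaviside_neg (by linarith : x j - ξ < 0)]
        ring
    rw [hp t, hf t, h1, h2]
    have := lagrange_exact N x hx Q hQ t
    simp only [hcoef, ← hπ] at this ⊢
    rw [← this]; ring
  · -- ξ < t : f t = P.eval t
    have h1 : heaviside (t - ξ) = 1 := heaviside_pos (by linarith)
    have h2 : heaviside (ξ - t) = 0 := heaviside_neg (by linarith)
    have hcoef : ∀ j, f (x j) + s j t = P.eval (x j) := by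
      intro j
      rw [hf (x j), hs j t, h1, h2]
      rcases lt_or_gt_of_ne (hξx j) with hj | hj
      · rw [heaviside_pos (by linarith : (0:ℝ) < x j - ξ),
          heaviside_neg (by linarith : ξ - x j < 0)]
        ring
      · rw [heaviside_pos (by linarith : (0:ℝ) < ξ - x j),
          heaviside_neg (by linarith : x j - ξ < 0), hgval j]
        ring
    rw [hp t, hf t, h1, h2]
    have := lagrange_exact N x hx P hP t
    simp only [hcoef, ← hπ] at this ⊢
    rw [← this]; ring
end
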